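/- arXiv:2302.01581 — 3 statements merged into one kernel-verified Lean document; each statement's English description precedes it below -/
import Mathlib

section
/- For every z ∈ ℝ^K (K ≥ 1), the Euclidean projection of z onto the standard probability simplex Δ^{K−1} = {y ∈ ℝ^K : y_i ≥ 0 for all i, Σ_i y_i = 1}, i.e. the unique minimizer of ‖y − z‖² over y ∈ Δ^{K−1}, is given coordinatewise by sparsemax_i(z) = max(z_i − τ(z), 0), where τ(z) := ((Σ_{j≤k(z)} z_(j)) − 1)/k(z) and k(z) := max{k ∈ {1,…,K} : 1 + k·z_(k) > Σ_{j≤k} z_(j)} with z_(1) ≥ … ≥ z_(K) the sorted coordinates of z. -/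
/-!
For any threshold `τ` with `∑ i, (z i - τ)₊ = 1`, the vector `p = (z - τ)₊` lies in the
simplex and `z - p = min z τ` coordinatewise, so `⟪y - p, z - p⟫ ≤ τ (∑ y - ∑ p) = 0` for
every `y` in the simplex. This variational inequality gives
`‖p - z‖² + ‖y - p‖² ≤ ‖y - z‖²`, hence `p` is the unique nearest point. The sorted formula
produces such a threshold: maximality of `k(z)` puts exactly the `k(z)` largest coordinates
strictly above `τ(z)`, and their excesses sum to `∑_{j ≤ k(z)} z_(j) - k(z) τ(z) = 1`.
-/

open Finset

noncomputable section

/-- The standard probability simplex `Δ^{K−1} ⊆ ℝ^K`. -/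
def stdSimplex' (K : ℕ) : Set (Fin K → ℝ) :=
  {y | (∀ i, 0 ≤ y i) ∧ ∑ i, y i = 1}

/-- `z_(k)` for `k = 1, …, K`: the `k`-th largest coordinate of `z`, given a
sorting permutation `σ` (so that `i ↦ z (σ i)` is decreasing). -/
def sortedCoord {K : ℕ} (z : Fin K → ℝ) (σ : Equiv.Perm (Fin K)) (k : ℕ) : ℝ :=
  if h : k - 1 < K then z (σ ⟨k - 1, h⟩) else 0

open Classical in
/-- The set `{k ∈ {1,…,K} : 1 + k·z_(k) > Σ_{j ≤ k} z_(j)}`. -/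
def kSet {K : ℕ} (z : Fin K → ℝ) (σ : Equiv.Perm (Fin K)) : Finset ℕ :=
  (Finset.Icc 1 K).filter
    (fun k => 1 + (k : ℝ) * sortedCoord z σ k > ∑ j ∈ Finset.Icc 1 k, sortedCoord z σ j)

/-- `k(z) := max {k ∈ {1,…,K} : 1 + k·z_(k) > Σ_{j ≤ k} z_(j)}`. -/
def kFun {K : ℕ} (z : Fin K → ℝ) (σ : Equiv.Perm (Fin K)) : ℕ :=
  sSup (kSet z σ : Set ℕ)

/-- `τ(z) := ((Σ_{j ≤ k(z)} z_(j)) − 1) / k(z)`. -/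
def tauFun {K : ℕ} (z : Fin K → ℝ) (σ : Equiv.Perm (Fin K)) : ℝ :=
  ((∑ j ∈ Finset.Icc 1 (kFun z σ), sortedCoord z σ j) - 1) / (kFun z σ : ℝ)

theorem mul_sub_max_sub_le {y z τ : ℝ} (hy : 0 ≤ y) :
    (y - max (z - τ) 0) * (z - max (z - τ) 0) ≤ τ * (y - max (z - τ) 0) := by
  rcases le_total z τ with h | h
  · rw [max_eq_right (sub_nonpos.2 h)]
    nlinarith
  · rw [max_eq_left (sub_nonneg.2 h)]
    linarith

section Threshold

variable {ι : Type*} [Fintype ι] {z : ι → ℝ} {τ : ℝ}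

theorem max_sub_mem_stdSimplex (hτ : ∑ i, max (z i - τ) 0 = 1) :
    (fun i => max (z i - τ) 0) ∈ stdSimplex ℝ ι :=
  ⟨fun _ => le_max_right _ _, hτ⟩

theorem sum_sq_max_sub_add_le (hτ : ∑ i, max (z i - τ) 0 = 1) {y : ι → ℝ}
    (hy : y ∈ stdSimplex ℝ ι) :
    ∑ i, (max (z i - τ) 0 - z i) ^ 2 + ∑ i, (y i - max (z i - τ) 0) ^ 2 ≤
      ∑ i, (y i - z i) ^ 2 := by
  set p : ι → ℝ := fun i => max (z i - τ) 0
  have hvar : ∑ i, (y i - p i) * (z i - p i) ≤ 0 :=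
    calc ∑ i, (y i - p i) * (z i - p i) ≤ ∑ i, τ * (y i - p i) :=
          sum_le_sum fun i _ => mul_sub_max_sub_le (hy.1 i)
      _ = 0 := by rw [← mul_sum, sum_sub_distrib, hy.2, hτ, sub_self, mul_zero]
  have hexpand : ∑ i, (y i - z i) ^ 2 =
      ∑ i, (p i - z i) ^ 2 + ∑ i, (y i - p i) ^ 2 - 2 * ∑ i, (y i - p i) * (z i - p i) := by
    rw [mul_sum, ← sum_add_distrib, ← sum_sub_distrib]
    exact sum_congr rfl fun i _ => by ring
  linarith

theorem sum_sq_max_sub_le (hτ : ∑ i, max (z i - τ) 0 = 1) {y : ι → ℝ}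
    (hy : y ∈ stdSimplex ℝ ι) :
    ∑ i, (max (z i - τ) 0 - z i) ^ 2 ≤ ∑ i, (y i - z i) ^ 2 :=
  (le_add_of_nonneg_right (sum_nonneg fun _ _ => sq_nonneg _)).trans
    (sum_sq_max_sub_add_le hτ hy)

theorem eq_max_sub_of_forall_sum_sq_le (hτ : ∑ i, max (z i - τ) 0 = 1) {q : ι → ℝ}
    (hq : q ∈ stdSimplex ℝ ι)
    (hmin : ∀ y ∈ stdSimplex ℝ ι, ∑ i, (q i - z i) ^ 2 ≤ ∑ i, (y i - z i) ^ 2) :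
    q = fun i => max (z i - τ) 0 := by
  have hle := (sum_sq_max_sub_add_le hτ hq).trans (hmin _ (max_sub_mem_stdSimplex hτ))
  have hzero : ∑ i, (q i - max (z i - τ) 0) ^ 2 = 0 :=
    le_antisymm (by linarith) (sum_nonneg fun _ _ => sq_nonneg _)
  funext i
  rw [sum_eq_zero_iff_of_nonneg fun _ _ => sq_nonneg _] at hzero
  exact sub_eq_zero.1 (pow_eq_zero_iff two_ne_zero |>.1 (hzero i (mem_univ i)))

end Threshold

section Sorted

variable {K : ℕ} {z : Fin K → ℝ} {σ : Equiv.Perm (Fin K)}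

theorem sortedCoord_le_sortedCoord (hσ : Antitone (fun i => z (σ i))) {i j : ℕ} (hi : 1 ≤ i)
    (hij : i ≤ j) (hj : j ≤ K) : sortedCoord z σ j ≤ sortedCoord z σ i := by
  unfold sortedCoord
  rw [dif_pos (by omega), dif_pos (by omega)]
  exact hσ (Fin.mk_le_mk.2 (by omega))

theorem sum_Icc_sortedCoord (f : ℝ → ℝ) :
    ∑ j ∈ Icc 1 K, f (sortedCoord z σ j) = ∑ i, f (z i) := by
  have hshift (i : Fin K) : sortedCoord z σ (i + 1) = z (σ i) := by simp [sortedCoord]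
  rw [← Equiv.sum_comp σ, ← Ico_add_one_right_eq_Icc, ← zero_add 1, ← sum_Ico_add',
    ← range_eq_Ico, ← Fin.sum_univ_eq_sum_range (fun j => f (sortedCoord z σ (j + 1)))]
  simp only [hshift]

theorem mem_kSet {k : ℕ} :
    k ∈ kSet z σ ↔ k ∈ Icc 1 K ∧
      ∑ j ∈ Icc 1 k, sortedCoord z σ j < 1 + k * sortedCoord z σ k := by
  simp [kSet]

theorem kFun_mem_kSet (hK : 1 ≤ K) : kFun z σ ∈ kSet z σ := by
  have hone : 1 ∈ kSet z σ := by simp [mem_kSet, hK]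
  exact Nat.sSup_mem ⟨1, hone⟩ (kSet z σ).bddAbove

theorem le_kFun {k : ℕ} (hk : k ∈ kSet z σ) : k ≤ kFun z σ :=
  le_csSup (kSet z σ).bddAbove (by exact_mod_cast hk)

theorem one_le_kFun (hK : 1 ≤ K) : 1 ≤ kFun z σ :=
  (mem_Icc.1 (mem_kSet.1 (kFun_mem_kSet hK)).1).1

theorem kFun_le : kFun z σ ≤ K :=
  csSup_le' fun _ hk => (mem_Icc.1 (mem_kSet.1 hk).1).2

theorem kFun_mul_tauFun (hK : 1 ≤ K) :
    kFun z σ * tauFun z σ = ∑ j ∈ Icc 1 (kFun z σ), sortedCoord z σ j - 1 := by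
  have hk : (0 : ℝ) < kFun z σ := by exact_mod_cast one_le_kFun hK
  rw [tauFun, mul_div_cancel₀ _ hk.ne']

theorem tauFun_lt_sortedCoord (hK : 1 ≤ K) (hσ : Antitone (fun i => z (σ i))) {j : ℕ}
    (hj : 1 ≤ j) (hjk : j ≤ kFun z σ) : tauFun z σ < sortedCoord z σ j := by
  have hkmem := (mem_kSet.1 (kFun_mem_kSet (z := z) (σ := σ) hK)).2
  have hkpos : (0 : ℝ) < kFun z σ := by exact_mod_cast one_le_kFun hK
  have : tauFun z σ < sortedCoord z σ (kFun z σ) :=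
    lt_of_mul_lt_mul_left (by linarith [kFun_mul_tauFun (z := z) (σ := σ) hK]) hkpos.le
  exact this.trans_le (sortedCoord_le_sortedCoord hσ hj hjk kFun_le)

theorem sortedCoord_le_tauFun (hK : 1 ≤ K) (hσ : Antitone (fun i => z (σ i))) {j : ℕ}
    (hkj : kFun z σ < j) (hj : j ≤ K) : sortedCoord z σ j ≤ tauFun z σ := by
  set k := kFun z σ
  have hk1 : 1 ≤ k := one_le_kFun hK
  have hnext : ¬ k + 1 ∈ kSet z σ := fun h => by have := le_kFun h; omega
  have hineq : 1 + (k + 1 : ℝ) * sortedCoord z σ (k + 1) ≤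
      ∑ j ∈ Icc 1 k, sortedCoord z σ j + sortedCoord z σ (k + 1) := by
    rw [mem_kSet, sum_Icc_succ_top (by omega : 1 ≤ k + 1)] at hnext
    push_cast at hnext
    exact not_lt.1 fun h => hnext ⟨mem_Icc.2 ⟨by omega, by omega⟩, h⟩
  have hkpos : (0 : ℝ) < k := by exact_mod_cast hk1
  have : sortedCoord z σ (k + 1) ≤ tauFun z σ :=
    le_of_mul_le_mul_left (by linarith [kFun_mul_tauFun (z := z) (σ := σ) hK]) hkpos
  exact (sortedCoord_le_sortedCoord hσ (by omega) hkj hj).trans this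

theorem sum_max_sub_tauFun_eq_one (hK : 1 ≤ K) (hσ : Antitone (fun i => z (σ i))) :
    ∑ i, max (z i - tauFun z σ) 0 = 1 := by
  set k := kFun z σ
  set τ := tauFun z σ
  have hkτ : (k : ℝ) * τ = ∑ j ∈ Icc 1 k, sortedCoord z σ j - 1 := kFun_mul_tauFun hK
  have hIcc (n : ℕ) : Icc 1 n = Ioc 0 n := by rw [← Icc_add_one_left_eq_Ioc, zero_add]
  have hhead : ∑ j ∈ Ioc 0 k, max (sortedCoord z σ j - τ) 0 =
      ∑ j ∈ Ioc 0 k, (sortedCoord z σ j - τ) :=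
    sum_congr rfl fun j hj => max_eq_left (sub_nonneg.2
      (tauFun_lt_sortedCoord hK hσ (mem_Ioc.1 hj).1 (mem_Ioc.1 hj).2).le)
  have htail : ∑ j ∈ Ioc k K, max (sortedCoord z σ j - τ) 0 = 0 :=
    sum_eq_zero fun j hj => max_eq_right (sub_nonpos.2
      (sortedCoord_le_tauFun hK hσ (mem_Ioc.1 hj).1 (mem_Ioc.1 hj).2))
  rw [← sum_Icc_sortedCoord (fun x => max (x - τ) 0), hIcc,
    ← sum_Ioc_consecutive _ (Nat.zero_le k) kFun_le, hhead, htail, add_zero, sum_sub_distrib,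
    sum_const, Nat.card_Ioc, Nat.sub_zero, nsmul_eq_mul, ← hIcc, hkτ]
  ring

end Sorted

/-- the Euclidean projection of `z` onto the simplex (the unique
minimizer of `‖y − z‖²` over `Δ^{K−1}`) is given coordinatewise by
`sparsemax_i(z) = max(z_i − τ(z), 0)`. -/
theorem sparsemax_eq_pos_part (K : ℕ) (hK : 1 ≤ K) (z : Fin K → ℝ)
    (σ : Equiv.Perm (Fin K)) (hσ : Antitone (fun i => z (σ i))) :
    (∃! p : Fin K → ℝ, p ∈ stdSimplex' K ∧
        ∀ y ∈ stdSimplex' K, ∑ i, (p i - z i) ^ 2 ≤ ∑ i, (y i - z i) ^ 2) ∧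
    ∀ p : Fin K → ℝ,
      (p ∈ stdSimplex' K ∧
        ∀ y ∈ stdSimplex' K, ∑ i, (p i - z i) ^ 2 ≤ ∑ i, (y i - z i) ^ 2) →
      ∀ i, p i = max (z i - tauFun z σ) 0 := by
  have hτ := sum_max_sub_tauFun_eq_one hK hσ
  have hunique {q : Fin K → ℝ} (hq : q ∈ stdSimplex' K ∧
      ∀ y ∈ stdSimplex' K, ∑ i, (q i - z i) ^ 2 ≤ ∑ i, (y i - z i) ^ 2) :=
    eq_max_sub_of_forall_sum_sq_le hτ hq.1 hq.2
  exact ⟨⟨_, ⟨max_sub_mem_stdSimplex hτ, fun _ hy => sum_sq_max_sub_le hτ hy⟩,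
    fun _ => hunique⟩, fun _ hq => congrFun (hunique hq)⟩
end
end

section
/- For z ∈ ℝ^K (K ≥ 1) and y ∈ ℝ^K, the following are equivalent: (i) y is the Euclidean projection of z onto the standard probability simplex Δ^{K−1} (the unique minimizer of ‖y − z‖² over Δ^{K−1}); (ii) y ∈ Δ^{K−1} and there exists τ ∈ ℝ such that y_i = max(z_i − τ, 0) for every i ∈ {1,…,K}. -/
/-!
The map `w ↦ ∑ i, (w i - z i) ^ 2` is strictly convex, so it has at most one minimizer on the
simplex. A vector of the form `y i = max (z i - τ) 0` is a minimizer: coordinatewise it satisfies the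
variational inequality of the projection onto `[0, ∞)` at `z i - τ`, and the shift `τ` contributes
nothing because every competitor has the same coordinate sum as `y`. Such a `τ` always exists by
the intermediate value theorem, since `τ ↦ ∑ i, max (z i - τ) 0` is continuous, vanishes at
`τ = max z` and is at least `1` at `τ = max z - 1`.
-/

open Finset

noncomputable section

theorem max_zero_sub_mul_sub_max_zero_nonneg {a w : ℝ} (hw : 0 ≤ w) :
    0 ≤ (max a 0 - a) * (w - max a 0) := by
  rcases le_total a 0 with ha | ha
  · rw [max_eq_right ha]
    nlinarith
  · simp [max_eq_left ha]

section Simplex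

variable {ι : Type*} [Fintype ι]

theorem strictConvexOn_univ_sum_sub_sq (z : ι → ℝ) :
    StrictConvexOn ℝ Set.univ fun w : ι → ℝ => ∑ i, (w i - z i) ^ 2 := by
  refine ⟨convex_univ, fun x _ y _ hxy a b ha hb hab => ?_⟩
  obtain ⟨j, hj⟩ : ∃ j, x j ≠ y j := Function.ne_iff.mp hxy
  have gap : ∀ i, a * (x i - z i) ^ 2 + b * (y i - z i) ^ 2 - (a * x i + b * y i - z i) ^ 2
      = a * b * (x i - y i) ^ 2 := by
    intro i
    obtain rfl : b = 1 - a := by linarith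
    ring
  simp only [Pi.add_apply, Pi.smul_apply, smul_eq_mul, mul_sum, ← sum_add_distrib]
  refine sum_lt_sum (fun i _ => ?_) ⟨j, mem_univ j, ?_⟩
  · nlinarith [gap i, mul_nonneg (mul_nonneg ha.le hb.le) (sq_nonneg (x i - y i))]
  · nlinarith [gap j, mul_pos (mul_pos ha hb) (sq_pos_of_ne_zero (sub_ne_zero.mpr hj))]

theorem isMinOn_sum_sub_sq_max_sub (z : ι → ℝ) (τ : ℝ)
    (hτ : ∑ i, max (z i - τ) 0 = 1) :
    IsMinOn (fun w : ι → ℝ => ∑ i, (w i - z i) ^ 2) (stdSimplex ℝ ι)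
      (fun i => max (z i - τ) 0) := by
  set y : ι → ℝ := fun i => max (z i - τ) 0
  refine isMinOn_iff.mpr fun w ⟨hw₀, hw₁⟩ => ?_
  have firstOrder : ∀ i, 0 ≤ (y i - (z i - τ)) * (w i - y i) :=
    fun i => max_zero_sub_mul_sub_max_zero_nonneg (hw₀ i)
  calc ∑ i, (y i - z i) ^ 2
      ≤ ∑ i, ((w i - z i) ^ 2 + 2 * τ * (w i - y i)) :=
        sum_le_sum fun i _ => by nlinarith [firstOrder i, sq_nonneg (w i - y i)]
    _ = ∑ i, (w i - z i) ^ 2 := by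
        rw [sum_add_distrib, ← mul_sum, sum_sub_distrib, hw₁, hτ]
        ring

theorem exists_sum_max_sub_eq [Nonempty ι] (z : ι → ℝ) {c : ℝ} (hc : 0 ≤ c) :
    ∃ τ, ∑ i, max (z i - τ) 0 = c := by
  set f : ℝ → ℝ := fun τ => ∑ i, max (z i - τ) 0
  have hf : Continuous f := by fun_prop
  obtain ⟨j, -, hj⟩ := exists_mem_eq_sup' univ_nonempty z
  set m := univ.sup' univ_nonempty z
  have hfm : f m = 0 :=
    sum_eq_zero fun i _ => max_eq_right (by linarith [le_sup' z (mem_univ i)])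
  have hfmc : c ≤ f (m - c) := by
    calc c = max (z j - (m - c)) 0 := by rw [← hj, sub_sub_cancel, max_eq_left hc]
      _ ≤ f (m - c) := single_le_sum (f := fun i => max (z i - (m - c)) 0)
          (fun i _ => le_max_right _ _) (mem_univ j)
  obtain ⟨τ, -, hτ⟩ := intermediate_value_Icc' (by linarith : m - c ≤ m) hf.continuousOn
    ⟨hfm ▸ hc, hfmc⟩
  exact ⟨τ, hτ⟩

end Simplex

theorem projection_iff_pos_part_form_general (K : ℕ) (z y : Fin K → ℝ) :
    (y ∈ stdSimplex' K ∧
        ∀ w ∈ stdSimplex' K, ∑ i, (y i - z i) ^ 2 ≤ ∑ i, (w i - z i) ^ 2) ↔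
    (y ∈ stdSimplex' K ∧ ∃ τ : ℝ, ∀ i, y i = max (z i - τ) 0) := by
  change (y ∈ stdSimplex ℝ (Fin K) ∧ _) ↔ (y ∈ stdSimplex ℝ (Fin K) ∧ _)
  refine and_congr_right fun hy => ⟨fun hmin => ?_, fun ⟨τ, hτ⟩ => ?_⟩
  · have : Nonempty (Fin K) :=
      univ_nonempty_iff.mp (nonempty_of_sum_ne_zero (hy.2 ▸ one_ne_zero))
    obtain ⟨τ, hτ⟩ := exists_sum_max_sub_eq z zero_le_one
    have hy' : (fun i => max (z i - τ) 0) ∈ stdSimplex ℝ (Fin K) :=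
      ⟨fun i => le_max_right _ _, hτ⟩
    have := ((strictConvexOn_univ_sum_sub_sq z).subset (Set.subset_univ _)
      (convex_stdSimplex ℝ (Fin K))).eq_of_isMinOn (isMinOn_iff.mpr hmin)
      (isMinOn_sum_sub_sq_max_sub z τ hτ) hy hy'
    exact ⟨τ, congrFun this⟩
  · obtain rfl : y = fun i => max (z i - τ) 0 := funext hτ
    exact isMinOn_iff.mp (isMinOn_sum_sub_sq_max_sub z τ hy.2)

/-- `y` is the Euclidean projection of `z` onto `Δ^{K−1}` iff
`y ∈ Δ^{K−1}` and `y_i = max(z_i − τ, 0)` for some `τ ∈ ℝ` and all `i`. -/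
theorem projection_iff_pos_part_form (K : ℕ) (hK : 1 ≤ K) (z y : Fin K → ℝ) :
    (y ∈ stdSimplex' K ∧
        ∀ w ∈ stdSimplex' K, ∑ i, (y i - z i) ^ 2 ≤ ∑ i, (w i - z i) ^ 2) ↔
    (y ∈ stdSimplex' K ∧ ∃ τ : ℝ, ∀ i, y i = max (z i - τ) 0) :=
  projection_iff_pos_part_form_general K z y

end
end

section
/- Let z ∈ ℝ^K (K ≥ 1) with z_j ≠ τ(z) for every j, where τ(z) is the unique real number with Σ_j max(z_j − τ(z), 0) = 1. Let s ∈ ℝ^K be the indicator vector of S(z) = {j : sparsemax_j(z) > 0} (s_j = 1 if j ∈ S(z), s_j = 0 otherwise). Then the derivative of sparsemax at z, applied to any vector v ∈ ℝ^K, equals s ⊙ (v − v̂·1), where v̂ = (Σ_{j∈S(z)} v_j)/|S(z)|, ⊙ is the coordinatewise (Hadamard) product, and 1 is the all-ones vector; equivalently, the Jacobian matrix is diag(s) − s sᵀ/|S(z)|. -/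
open Finset

noncomputable section

/-- `sparsemax(w)`: the Euclidean projection of `w` onto the simplex, i.e. the
(unique) minimizer of `‖y − w‖²` over `Δ^{K−1}`, as a map `ℝ^K → ℝ^K`. -/
def sparsemax (K : ℕ) (w : Fin K → ℝ) : Fin K → ℝ :=
  Classical.epsilon (fun p => p ∈ stdSimplex' K ∧
    ∀ y ∈ stdSimplex' K, ∑ i, (p i - w i) ^ 2 ≤ ∑ i, (y i - w i) ^ 2)

/-! The projection onto the simplex is the thresholding `w ↦ max (w - τ(w)) 0`. If no coordinate
of `z` equals `τ(z)`, the support `A = {i | τ(z) < z i}` is stable under small perturbations of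
`z`, and as long as it is, `τ(w)` is the affine function `(∑_{j∈A} w j - 1) / |A|`. So near `z`,
`sparsemax` is affine: it subtracts the mean over `A` on `A` and vanishes off `A`. -/

open Filter Topology

section Threshold

variable {ι : Type*}

/-- The `t` solving `∑ j ∈ A, (w j - t) = 1`. -/
def supportThreshold (A : Finset ι) (w : ι → ℝ) : ℝ :=
  (∑ j ∈ A, w j - 1) / #A

lemma continuous_supportThreshold (A : Finset ι) : Continuous (supportThreshold A) := by
  unfold supportThreshold
  fun_prop

def centerOn [DecidableEq ι] (A : Finset ι) : (ι → ℝ) →L[ℝ] (ι → ℝ) :=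
  ContinuousLinearMap.pi fun i =>
    if i ∈ A then ContinuousLinearMap.proj i - (#A : ℝ)⁻¹ • ∑ j ∈ A, ContinuousLinearMap.proj j
    else 0

lemma centerOn_apply [DecidableEq ι] (A : Finset ι) (v : ι → ℝ) (i : ι) :
    centerOn A v i = if i ∈ A then v i - (∑ j ∈ A, v j) / #A else 0 := by
  simp only [centerOn, ContinuousLinearMap.pi_apply]
  split_ifs <;> simp [div_eq_inv_mul]

variable [Fintype ι]

/-- For `p = max (w - t) 0` this is the variational inequality `⟪p - w, y - p⟫ ≥ 0`, which against
the simplex constraints reduces to the term-wise bound `(p i - w i) * (y i - p i) ≥ -t * (y i - p i)`. -/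
lemma sum_sq_max_sub_add_sum_sq_le (w y : ι → ℝ) (t : ℝ)
    (ht : ∑ i, max (w i - t) 0 = 1) (hy₀ : ∀ i, 0 ≤ y i) (hy₁ : ∑ i, y i = 1) :
    ∑ i, (max (w i - t) 0 - w i) ^ 2 + ∑ i, (y i - max (w i - t) 0) ^ 2
      ≤ ∑ i, (y i - w i) ^ 2 := by
  set p : ι → ℝ := fun i => max (w i - t) 0
  have hterm : ∀ i, -t * (y i - p i) ≤ (p i - w i) * (y i - p i) := by
    intro i
    rcases le_or_gt (w i - t) 0 with h | h
    · have hp : p i = 0 := max_eq_right h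
      rw [hp]; nlinarith [hy₀ i]
    · have hp : p i = w i - t := max_eq_left h.le
      rw [hp]; exact le_of_eq (by ring)
  have hcross : 0 ≤ ∑ i, (p i - w i) * (y i - p i) :=
    calc (0 : ℝ) = -t * (∑ i, y i - ∑ i, p i) := by rw [hy₁, ht]; ring
      _ = ∑ i, -t * (y i - p i) := by rw [← Finset.sum_sub_distrib, Finset.mul_sum]
      _ ≤ _ := Finset.sum_le_sum fun i _ => hterm i
  have hexpand : ∑ i, (y i - w i) ^ 2
      = ∑ i, (p i - w i) ^ 2 + ∑ i, (y i - p i) ^ 2 + 2 * ∑ i, (p i - w i) * (y i - p i) := by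
    rw [Finset.mul_sum, ← Finset.sum_add_distrib, ← Finset.sum_add_distrib]
    exact Finset.sum_congr rfl fun i _ => by ring
  linarith

lemma sum_max_sub_eq_sum_sub {A : Finset ι} {w : ι → ℝ} {t : ℝ} (hA : ∀ i, i ∈ A ↔ t < w i) :
    ∑ i, max (w i - t) 0 = ∑ i ∈ A, w i - #A * t := by
  classical
  have hmax : ∀ i, max (w i - t) 0 = if i ∈ A then w i - t else 0 := by
    intro i
    split_ifs with hi
    · exact max_eq_left (sub_nonneg.2 ((hA i).1 hi).le)
    · exact max_eq_right (sub_nonpos.2 (not_lt.1 (mt (hA i).2 hi)))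
  simp only [hmax, Finset.sum_ite_mem, Finset.univ_inter, Finset.sum_sub_distrib,
    Finset.sum_const, nsmul_eq_mul]

lemma supportThreshold_eq {A : Finset ι} {w : ι → ℝ} {t : ℝ} (hA : ∀ i, i ∈ A ↔ t < w i)
    (ht : ∑ i, max (w i - t) 0 = 1) : supportThreshold A w = t := by
  rw [sum_max_sub_eq_sum_sub hA] at ht
  have hcard : (#A : ℝ) ≠ 0 := by
    rintro h
    rw [Finset.card_eq_zero.1 (by exact_mod_cast h : #A = 0)] at ht
    simp at ht
  rw [supportThreshold, div_eq_iff hcard]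
  linarith

lemma sum_max_sub_supportThreshold {A : Finset ι} (hne : A.Nonempty) {w : ι → ℝ}
    (hA : ∀ i, i ∈ A ↔ supportThreshold A w < w i) :
    ∑ i, max (w i - supportThreshold A w) 0 = 1 := by
  have hcard : (#A : ℝ) ≠ 0 := Nat.cast_ne_zero.2 hne.card_pos.ne'
  rw [sum_max_sub_eq_sum_sub hA, supportThreshold, mul_div_cancel₀ _ hcard]
  ring

end Threshold

lemma sparsemax_eq_max_sub {K : ℕ} {w : Fin K → ℝ} {t : ℝ} (ht : ∑ i, max (w i - t) 0 = 1) :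
    sparsemax K w = fun i => max (w i - t) 0 := by
  set p : Fin K → ℝ := fun i => max (w i - t) 0
  have hp : p ∈ stdSimplex' K := ⟨fun i => le_max_right _ _, ht⟩
  have hq : sparsemax K w ∈ stdSimplex' K ∧
      ∀ y ∈ stdSimplex' K, ∑ i, (sparsemax K w i - w i) ^ 2 ≤ ∑ i, (y i - w i) ^ 2 :=
    Classical.epsilon_spec (p := fun q => q ∈ stdSimplex' K ∧
      ∀ y ∈ stdSimplex' K, ∑ i, (q i - w i) ^ 2 ≤ ∑ i, (y i - w i) ^ 2)
      ⟨p, hp, fun y hy => by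
        linarith [sum_sq_max_sub_add_sum_sq_le w y t ht hy.1 hy.2,
          Finset.sum_nonneg fun i (_ : i ∈ Finset.univ) => sq_nonneg (y i - p i)]⟩
  set q := sparsemax K w
  have hdist : ∑ i, (q i - p i) ^ 2 = 0 :=
    le_antisymm (by linarith [hq.2 p hp, sum_sq_max_sub_add_sum_sq_le w q t ht hq.1.1 hq.1.2])
      (Finset.sum_nonneg fun i _ => sq_nonneg _)
  funext i
  rw [Finset.sum_eq_zero_iff_of_nonneg fun i _ => sq_nonneg _] at hdist
  exact sub_eq_zero.1 (pow_eq_zero_iff two_ne_zero |>.1 (hdist i (Finset.mem_univ i)))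

lemma sparsemax_eq_centerOn_add {K : ℕ} {A : Finset (Fin K)} (hne : A.Nonempty) {w : Fin K → ℝ}
    (hA : ∀ i, i ∈ A ↔ supportThreshold A w < w i) :
    sparsemax K w = centerOn A w + fun i => if i ∈ A then (#A : ℝ)⁻¹ else 0 := by
  have hcard : (#A : ℝ) ≠ 0 := Nat.cast_ne_zero.2 hne.card_pos.ne'
  rw [sparsemax_eq_max_sub (sum_max_sub_supportThreshold hne hA)]
  funext i
  rw [Pi.add_apply, centerOn_apply]
  by_cases hi : i ∈ A
  · rw [if_pos hi, if_pos hi, max_eq_left (sub_nonneg.2 ((hA i).1 hi).le), supportThreshold]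
    field_simp
    ring
  · rw [if_neg hi, if_neg hi, max_eq_right (sub_nonpos.2 (not_lt.1 (mt (hA i).2 hi)))]
    simp

lemma eventually_lt_iff_of_ne {X : Type*} [TopologicalSpace X] {f g : X → ℝ} {x : X}
    (hf : ContinuousAt f x) (hg : ContinuousAt g x) (hfg : f x ≠ g x) :
    ∀ᶠ y in 𝓝 x, (f y < g y ↔ f x < g x) := by
  rcases hfg.lt_or_gt with h | h
  · filter_upwards [hf.eventually_lt hg h] with y hy
    simp [hy, h]
  · filter_upwards [hg.eventually_lt hf h] with y hy
    simp [hy.not_gt, h.not_gt]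

lemma hasFDerivAt_sparsemax {K : ℕ} {z : Fin K → ℝ} {τ : ℝ} (hτ : ∑ j, max (z j - τ) 0 = 1)
    (hsplit : ∀ j, z j ≠ τ) :
    HasFDerivAt (sparsemax K) (centerOn {i | τ < z i}) z := by
  set A : Finset (Fin K) := {i | τ < z i}
  have hA : ∀ i, i ∈ A ↔ τ < z i := by simp [A]
  have hthr : supportThreshold A z = τ := supportThreshold_eq hA hτ
  have hne : A.Nonempty := by
    rw [Finset.nonempty_iff_ne_empty]
    rintro h
    rw [sum_max_sub_eq_sum_sub hA, h] at hτ
    simp at hτ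
  have hsupport : ∀ᶠ w in 𝓝 z, ∀ i, i ∈ A ↔ supportThreshold A w < w i := by
    refine eventually_all.2 fun i => ?_
    filter_upwards [eventually_lt_iff_of_ne (continuous_supportThreshold A).continuousAt
      (continuous_apply i).continuousAt (by rw [hthr]; exact (hsplit i).symm)] with w hw
    rw [hw, hthr, hA]
  exact ((centerOn A).hasFDerivAt.add_const _).congr_of_eventuallyEq
    (hsupport.mono fun w hw => sparsemax_eq_centerOn_add hne hw)

open Classical in
theorem sparsemax_derivative_apply_general (K : ℕ) (z : Fin K → ℝ)
    (τ : ℝ) (hτ : ∑ j, max (z j - τ) 0 = 1) (hsplit : ∀ j, z j ≠ τ)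
    (s : Fin K → ℝ) (hs : ∀ j, s j = if 0 < sparsemax K z j then 1 else 0) :
    DifferentiableAt ℝ (sparsemax K) z ∧
    ∀ v : Fin K → ℝ, fderiv ℝ (sparsemax K) z v =
      fun i => s i * (v i -
        (∑ j ∈ Finset.univ.filter (fun l => 0 < sparsemax K z l), v j) /
          ((Finset.univ.filter (fun l => 0 < sparsemax K z l)).card : ℝ)) := by
  have hsupport :
      Finset.univ.filter (fun l => 0 < sparsemax K z l) = ({i | τ < z i} : Finset (Fin K)) := by
    ext i
    simp [sparsemax_eq_max_sub hτ]
  have hD := hasFDerivAt_sparsemax hτ hsplit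
  refine ⟨hD.differentiableAt, fun v => funext fun i => ?_⟩
  rw [hD.fderiv, hsupport, centerOn_apply, hs, sparsemax_eq_max_sub hτ]
  by_cases hi : τ < z i <;> simp [hi]

open Classical in
/-- away from splitting points, with `s` the indicator vector of
the support `S(z)` of `sparsemax(z)`, the derivative of `sparsemax` at `z`
applied to `v` is `s ⊙ (v − v̂·1)` where `v̂ = (Σ_{j ∈ S(z)} v_j)/|S(z)|`. -/
theorem sparsemax_derivative_apply (K : ℕ) (hK : 1 ≤ K) (z : Fin K → ℝ)
    (τ : ℝ) (hτ : ∑ j, max (z j - τ) 0 = 1) (hsplit : ∀ j, z j ≠ τ)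
    (s : Fin K → ℝ) (hs : ∀ j, s j = if 0 < sparsemax K z j then 1 else 0) :
    DifferentiableAt ℝ (sparsemax K) z ∧
    ∀ v : Fin K → ℝ, fderiv ℝ (sparsemax K) z v =
      fun i => s i * (v i -
        (∑ j ∈ Finset.univ.filter (fun l => 0 < sparsemax K z l), v j) /
          ((Finset.univ.filter (fun l => 0 < sparsemax K z l)).card : ℝ)) :=
  sparsemax_derivative_apply_general K z τ hτ hsplit s hs
end
end
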